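/- arXiv:1302.0504 — 2 statements merged into one kernel-verified Lean document; each statement's English description precedes it below -/
import Mathlib

section
/- Let 𝕃 be the abelian group given by generators x₁, x₂, x₃, x₄ and relations 2x₁ = 2x₂ = 2x₃ = 2x₄, let c := 2x₁, ω := 2c − (x₁+x₂+x₃+x₄), and let P be the submonoid of 𝕃 generated by x₁, x₂, x₃, x₄. Then every element x ∈ 𝕃 satisfies exactly one of the two alternatives: x ∈ P (i.e., x ≥ 0), or (ω + c) − x ∈ P (i.e., x ≤ ω + c). -/
/-!
Up to the relations, an element of `𝕃` is `∑ mᵢ xᵢ`, and it is seen by two invariants: its degree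
`d = ∑ mᵢ ∈ ℤ` and the number `s ∈ {0,…,4}` of odd coefficients `mᵢ`. Trading `2xᵢ` for `2x₀`
shows that `x ≥ 0` exactly when `s ≤ d`. Since `ω + c` has degree `2` and all four coefficients
odd, `x ↦ (ω + c) − x` sends `(d, s)` to `(2 − d, 4 − s)`, so `x ≤ ω + c` exactly when `d + 2 ≤ s`.
As `s ≡ d (mod 2)`, exactly one of `s ≤ d` and `d + 2 ≤ s` holds.
-/

/-- The subgroup of relations `2e₁ = 2e₂ = 2e₃ = 2e₄` in `ℤ⁴`. -/
def Lrel : AddSubgroup (Fin 4 → ℤ) :=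
  AddSubgroup.closure
    { (2 : ℤ) • Pi.single (0 : Fin 4) (1 : ℤ) - (2 : ℤ) • Pi.single 1 1,
      (2 : ℤ) • Pi.single (0 : Fin 4) (1 : ℤ) - (2 : ℤ) • Pi.single 2 1,
      (2 : ℤ) • Pi.single (0 : Fin 4) (1 : ℤ) - (2 : ℤ) • Pi.single 3 1 }

/-- The group `𝕃` of type `(2,2,2,2)`. -/
abbrev Lgrp : Type := (Fin 4 → ℤ) ⧸ Lrel

/-- The generators `x₁, x₂, x₃, x₄` of `𝕃`. -/
def xL (i : Fin 4) : Lgrp := QuotientAddGroup.mk (Pi.single i 1)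

/-- The canonical element `c = 2x₁`. -/
def cL : Lgrp := (2 : ℤ) • xL 0

/-- The dualizing element `ω = 2c − (x₁+x₂+x₃+x₄)`. -/
def ωL : Lgrp := (2 : ℤ) • cL - (xL 0 + xL 1 + xL 2 + xL 3)

/-- The cone `P` of positive elements: the submonoid generated by `x₁, x₂, x₃, x₄`. -/
def Lpos : AddSubmonoid Lgrp := AddSubmonoid.closure {xL 0, xL 1, xL 2, xL 3}

theorem zsmul_mem_of_nonneg {M S : Type*} [AddGroup M] [SetLike S M] [AddSubmonoidClass S M]
    {s : S} {x : M} (hx : x ∈ s) {n : ℤ} (hn : 0 ≤ n) : n • x ∈ s := by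
  lift n to ℕ using hn
  rw [natCast_zsmul]
  exact nsmul_mem hx n

theorem ZMod.val_one_sub_add_val (e : ZMod 2) : (1 - e).val + e.val = 1 := by
  fin_cases e <;> rfl

namespace Lgrp

variable {A : Type*} [AddCommGroup A]

def lift (a : Fin 4 → A) (ha : ∀ i, (2 : ℤ) • a i = (2 : ℤ) • a 0) : Lgrp →+ A :=
  QuotientAddGroup.lift Lrel (Fintype.linearCombination ℤ a).toAddMonoidHom <| by
    rw [Lrel, AddSubgroup.closure_le]
    rintro v (rfl | rfl | rfl) <;>
      simp only [SetLike.mem_coe, AddMonoidHom.mem_ker, LinearMap.toAddMonoidHom_coe, map_sub,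
        map_zsmul, Fintype.linearCombination_apply_single, one_smul, ha, sub_self]

@[simp]
theorem lift_xL (a : Fin 4 → A) (ha : ∀ i, (2 : ℤ) • a i = (2 : ℤ) • a 0) (i : Fin 4) :
    lift a ha (xL i) = a i := by
  simp [lift, xL]

theorem hom_ext {f g : Lgrp →+ A} (h : ∀ i, f (xL i) = g (xL i)) : f = g := by
  ext i
  simpa [xL] using h i

theorem exists_eq_sum_zsmul_xL (x : Lgrp) : ∃ m : Fin 4 → ℤ, x = ∑ i, m i • xL i := by
  obtain ⟨v, rfl⟩ := QuotientAddGroup.mk_surjective x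
  refine ⟨v, ?_⟩
  conv_lhs => rw [← Finset.univ_sum_single v]
  simp only [QuotientAddGroup.mk_sum, xL, ← QuotientAddGroup.mk_zsmul, ← Pi.single_smul,
    smul_eq_mul, mul_one]

theorem two_zsmul_xL (i : Fin 4) : (2 : ℤ) • xL i = (2 : ℤ) • xL 0 := by
  rw [xL, xL, ← QuotientAddGroup.mk_zsmul, ← QuotientAddGroup.mk_zsmul, QuotientAddGroup.eq,
    neg_add_eq_sub]
  fin_cases i
  · simp
  all_goals exact AddSubgroup.subset_closure (by simp)

theorem zsmul_xL_eq (m : ℤ) (i : Fin 4) : m • xL i = (2 * (m / 2)) • xL 0 + (m % 2) • xL i := by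
  rw [mul_comm, mul_zsmul, ← two_zsmul_xL i, ← mul_zsmul, mul_comm, ← add_zsmul,
    Int.mul_ediv_add_emod]

theorem xL_mem_Lpos (i : Fin 4) : xL i ∈ Lpos := by
  apply AddSubmonoid.subset_closure
  fin_cases i <;> simp

def degree : Lgrp →+ ℤ := lift (fun _ => 1) fun _ => rfl

def parity (j : Fin 4) : Lgrp →+ ZMod 2 :=
  lift (Pi.single j 1) fun i => by
    have two_zsmul_eq_zero : ∀ a : ZMod 2, (2 : ℤ) • a = 0 := by decide
    rw [two_zsmul_eq_zero, two_zsmul_eq_zero]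

def oddCount (x : Lgrp) : ℕ := ∑ j, (parity j x).val

theorem oddCount_xL (i : Fin 4) : oddCount (xL i) = 1 := by
  simp [oddCount, parity, Pi.single_apply, apply_ite ZMod.val, ZMod.val_one]

theorem oddCount_add_le (x y : Lgrp) : oddCount (x + y) ≤ oddCount x + oddCount y := by
  simp only [oddCount, map_add, ← Finset.sum_add_distrib]
  exact Finset.sum_le_sum fun j _ => ZMod.val_add_le _ _

theorem oddCount_le_degree_of_mem {x : Lgrp} (hx : x ∈ Lpos) : (oddCount x : ℤ) ≤ degree x := by
  induction hx using AddSubmonoid.closure_induction with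
  | mem g hg => rcases hg with rfl | rfl | rfl | rfl <;> simp [oddCount_xL, degree]
  | zero => simp [oddCount]
  | add a b _ _ ha hb =>
    have := oddCount_add_le a b
    rw [map_add]
    omega

theorem mem_Lpos_of_oddCount_le {x : Lgrp} (h : (oddCount x : ℤ) ≤ degree x) : x ∈ Lpos := by
  obtain ⟨m, rfl⟩ := exists_eq_sum_zsmul_xL x
  have hdeg : degree (∑ i, m i • xL i) = ∑ i, m i := by simp [degree]
  have hparity (j : Fin 4) : parity j (∑ i, m i • xL i) = m j := by
    simp [parity, Pi.single_apply]
  have hcount : (oddCount (∑ i, m i • xL i) : ℤ) = ∑ i, m i % 2 := by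
    simp only [oddCount, hparity, Nat.cast_sum, ZMod.val_intCast, Nat.cast_ofNat]
  have hsplit : ∑ i, 2 * (m i / 2) = ∑ i, m i - ∑ i, m i % 2 := by
    rw [eq_sub_iff_add_eq, ← Finset.sum_add_distrib]
    exact Finset.sum_congr rfl fun i _ => Int.mul_ediv_add_emod _ _
  rw [hdeg, hcount] at h
  rw [Finset.sum_congr rfl fun i _ => zsmul_xL_eq (m i) i, Finset.sum_add_distrib,
    ← Finset.sum_smul]
  exact add_mem (zsmul_mem_of_nonneg (xL_mem_Lpos 0) (by omega))
    (sum_mem fun i _ => zsmul_mem_of_nonneg (xL_mem_Lpos i) (Int.emod_nonneg _ two_ne_zero))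

theorem mem_Lpos_iff (x : Lgrp) : x ∈ Lpos ↔ (oddCount x : ℤ) ≤ degree x :=
  ⟨oddCount_le_degree_of_mem, mem_Lpos_of_oddCount_le⟩

theorem oddCount_modEq_degree (x : Lgrp) : (oddCount x : ℤ) ≡ degree x [ZMOD 2] := by
  have hsum : ∑ j, parity j = (Int.castAddHom (ZMod 2)).comp degree :=
    hom_ext fun i => by simp [degree, parity]
  refine (ZMod.intCast_eq_intCast_iff _ _ 2).1 ?_
  calc ((oddCount x : ℤ) : ZMod 2) = ∑ j, parity j x := by simp [oddCount]
    _ = degree x := by rw [← AddMonoidHom.finsetSum_apply, hsum]; rfl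

theorem degree_omega_add_c : degree (ωL + cL) = 2 := by
  simp [ωL, cL, degree]

theorem parity_omega_add_c (j : Fin 4) : parity j (ωL + cL) = 1 := by
  fin_cases j <;> simp [ωL, cL, parity, show (2 : ZMod 2) = 0 from rfl]

theorem oddCount_omega_add_c_sub_add (x : Lgrp) : oddCount (ωL + cL - x) + oddCount x = 4 := by
  simp only [oddCount, map_sub, parity_omega_add_c, ← Finset.sum_add_distrib,
    ZMod.val_one_sub_add_val]
  rfl

end Lgrp

open Lgrp

/-- Every `x ∈ 𝕃` satisfies exactly one of the alternatives `x ≥ 0` (i.e. `x ∈ P`) or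
`x ≤ ω + c` (i.e. `(ω + c) − x ∈ P`). -/
theorem pos_or_le_omega_add_c (x : Lgrp) :
    Xor' (x ∈ Lpos) ((ωL + cL) - x ∈ Lpos) := by
  have hparity := oddCount_modEq_degree x
  have hcount := oddCount_omega_add_c_sub_add x
  have hdeg : degree (ωL + cL - x) = 2 - degree x := by rw [map_sub, degree_omega_add_c]
  refine xor_iff_iff_not.2 ?_
  rw [mem_Lpos_iff, mem_Lpos_iff, hdeg]
  rw [Int.ModEq] at hparity
  omega
end

section
/- Let k be a field with char k ≠ 2, λ ∈ k with λ ≠ 0, 1, and S = k[X₁,X₂,X₃,X₄]/(X₃² − X₂² − X₁², X₄² − X₂² − λX₁²), graded by the group 𝕃 via deg xᵢ = xᵢ. For x ∈ 𝕃 with normal form x = l₁x₁ + l₂x₂ + l₃x₃ + l₄x₄ + l·c (lᵢ ∈ {0,1}, l ∈ ℤ), the k-dimension of the homogeneous component S_x equals l + 1 if l ≥ 0, and S_x = 0 if l < 0. In particular dim_k S_{xᵢ} = 1 for each i and dim_k S_c = 2. -/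
open MvPolynomial

/-- The defining ideal `(X₃² − X₂² − X₁², X₄² − X₂² − λX₁²)`. -/
noncomputable def relIdeal (k : Type*) [Field k] (lam : k) : Ideal (MvPolynomial (Fin 4) k) :=
  Ideal.span
    {(X 2 : MvPolynomial (Fin 4) k) ^ 2 - X 1 ^ 2 - X 0 ^ 2,
     (X 3 : MvPolynomial (Fin 4) k) ^ 2 - X 1 ^ 2 - C lam * X 0 ^ 2}

/-- The homogeneous coordinate algebra `S` of the weighted projective line of type
`(2,2,2,2;λ)`. -/
abbrev Sring (k : Type*) [Field k] (lam : k) : Type _ :=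
  MvPolynomial (Fin 4) k ⧸ relIdeal k lam

/-- The `𝕃`-degree of a monomial exponent `a ∈ ℕ⁴`, namely `Σᵢ aᵢ·xᵢ`. -/
noncomputable def mdeg (a : Fin 4 →₀ ℕ) : Lgrp := ∑ i, (a i : ℤ) • xL i

/-- The homogeneous component `S_x ⊆ S` of degree `x ∈ 𝕃`: the `k`-span of the images in `S`
of the monomials of `𝕃`-degree `x`. -/
noncomputable def Sx (k : Type*) [Field k] (lam : k) (x : Lgrp) : Submodule k (Sring k lam) :=
  Submodule.span k (Ideal.Quotient.mk (relIdeal k lam) ''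
    { m | ∃ a : Fin 4 →₀ ℕ, mdeg a = x ∧ m = monomial a (1 : k) })

section Degree

lemma xL_two_zsmul (i : Fin 4) : (2 : ℤ) • xL i = cL := by
  have hmem : (2 : ℤ) • Pi.single i (1 : ℤ) - (2 : ℤ) • Pi.single 0 1 ∈ Lrel := by
    rw [← neg_mem_iff, neg_sub]
    fin_cases i
    · simp
    all_goals exact AddSubgroup.subset_closure (by simp)
  rw [cL, xL, xL, ← QuotientAddGroup.mk_zsmul, ← QuotientAddGroup.mk_zsmul]
  exact QuotientAddGroup.eq_iff_sub_mem.2 hmem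

def degreeParity : (Fin 4 → ℤ) →+ ℤ × (Fin 4 → ZMod 2) :=
  (∑ i, Pi.evalAddMonoidHom (fun _ => ℤ) i).prod
    (AddMonoidHom.compLeft (Int.castAddHom (ZMod 2)) (Fin 4))

lemma degreeParity_single (i : Fin 4) : degreeParity (Pi.single i 1) = (1, Pi.single i 1) := by
  ext j <;> simp [degreeParity, Pi.single_apply]

lemma Lrel_le_ker_degreeParity : Lrel ≤ degreeParity.ker := by
  rw [Lrel, AddSubgroup.closure_le]
  rintro _ (rfl | rfl | rfl) <;>
    simp [Prod.ext_iff, funext_iff, Fin.forall_fin_succ] <;> decide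

def degreeParityL : Lgrp →+ ℤ × (Fin 4 → ZMod 2) :=
  QuotientAddGroup.lift Lrel degreeParity Lrel_le_ker_degreeParity

lemma degreeParityL_xL (i : Fin 4) : degreeParityL (xL i) = (1, Pi.single i 1) :=
  degreeParity_single i

lemma degreeParityL_normalForm (l : Fin 4 → ℕ) (m : ℤ) :
    degreeParityL (∑ i, (l i : ℤ) • xL i + m • cL) =
      (∑ i, (l i : ℤ) + 2 * m, fun i => (l i : ZMod 2)) := by
  have two_eq_zero : (2 : ZMod 2) = 0 := rfl
  ext j
  · simp [map_sum, degreeParityL_xL, cL, mul_comm, Prod.fst_sum]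
  · simp [map_sum, degreeParityL_xL, cL, Pi.single_apply, Prod.snd_sum, Finset.sum_apply,
      two_eq_zero]

lemma normalForm_injective {l l' : Fin 4 → ℕ} (hl : ∀ i, l i < 2) (hl' : ∀ i, l' i < 2)
    {m m' : ℤ} (h : ∑ i, (l i : ℤ) • xL i + m • cL = ∑ i, (l' i : ℤ) • xL i + m' • cL) :
    l = l' ∧ m = m' := by
  have h' := congrArg degreeParityL h
  simp only [degreeParityL_normalForm, Prod.mk.injEq, funext_iff] at h'
  have hll' : l = l' := funext fun i => by
    have := (ZMod.natCast_eq_natCast_iff' _ _ 2).1 (h'.2 i)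
    rwa [Nat.mod_eq_of_lt (hl i), Nat.mod_eq_of_lt (hl' i)] at this
  subst hll'
  exact ⟨rfl, by linarith [h'.1]⟩

lemma mdeg_add_single_two (a : Fin 4 →₀ ℕ) (i : Fin 4) :
    mdeg (a + Finsupp.single i 2) = mdeg a + cL := by
  rw [← xL_two_zsmul i]
  simp only [mdeg, Finsupp.add_apply, Nat.cast_add, add_zsmul, Finset.sum_add_distrib]
  simp [Finsupp.single_apply]

lemma mdeg_eq_normalForm (a : Fin 4 →₀ ℕ) :
    mdeg a = ∑ i, ((a i % 2 : ℕ) : ℤ) • xL i + ((∑ i, a i / 2 : ℕ) : ℤ) • cL := by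
  rw [mdeg, Nat.cast_sum, Finset.sum_smul (R := ℤ) (M := Lgrp), ← Finset.sum_add_distrib]
  refine Finset.sum_congr rfl fun i _ => ?_
  rw [← xL_two_zsmul i, smul_smul, ← add_zsmul]
  congr 1
  omega

lemma mdeg_eq_iff {l : Fin 4 → ℕ} (hl : ∀ i, l i < 2) {m : ℤ} (a : Fin 4 →₀ ℕ) :
    mdeg a = ∑ i, (l i : ℤ) • xL i + m • cL ↔
      (∀ i, a i % 2 = l i) ∧ ((∑ i, a i / 2 : ℕ) : ℤ) = m := by
  rw [mdeg_eq_normalForm]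
  constructor
  · intro h
    obtain ⟨hmod, hdiv⟩ := normalForm_injective (fun i => Nat.mod_lt _ two_pos) hl h
    exact ⟨congrFun hmod, hdiv⟩
  · rintro ⟨hmod, rfl⟩
    simp only [hmod]

end Degree

section Ring

variable {k : Type*} [Field k] {lam : k}

local notation "mkS" => Ideal.Quotient.mk (relIdeal k lam)

lemma mk_monomial_add_X2_sq (b : Fin 4 →₀ ℕ) :
    mkS (monomial (b + Finsupp.single 2 2) 1) =
      mkS (monomial (b + Finsupp.single 1 2) 1) + mkS (monomial (b + Finsupp.single 0 2) 1) := by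
  have hrel : mkS (X 2 ^ 2) = mkS (X 1 ^ 2) + mkS (X 0 ^ 2) := by
    rw [← map_add, Ideal.Quotient.eq, ← sub_sub]
    exact Ideal.subset_span (by simp)
  simp only [monomial_add_single, map_mul, hrel, mul_add]

lemma mk_monomial_add_X3_sq (b : Fin 4 →₀ ℕ) :
    mkS (monomial (b + Finsupp.single 3 2) 1) =
      mkS (monomial (b + Finsupp.single 1 2) 1) +
        lam • mkS (monomial (b + Finsupp.single 0 2) 1) := by
  have hrel : mkS (X 3 ^ 2) = mkS (X 1 ^ 2) + lam • mkS (X 0 ^ 2) := by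
    rw [show lam • mkS (X 0 ^ 2) = mkS (C lam * X 0 ^ 2) by rw [← smul_eq_C_mul]; rfl,
      ← map_add, Ideal.Quotient.eq, ← sub_sub]
    exact Ideal.subset_span (by simp)
  simp only [monomial_add_single, map_mul, hrel, mul_add, mul_smul_comm]

lemma mk_monomial_mem_span_reduced {x : Lgrp} (a : Fin 4 →₀ ℕ) (ha : mdeg a = x) :
    mkS (monomial a 1) ∈ Submodule.span k
      ((fun b => mkS (monomial b 1)) '' {b | mdeg b = x ∧ b 2 < 2 ∧ b 3 < 2}) := by
  set N := Submodule.span k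
    ((fun b => mkS (monomial b 1)) '' {b | mdeg b = x ∧ b 2 < 2 ∧ b 3 < 2})
  induction hn : a 2 + a 3 using Nat.strong_induction_on generalizing a with
  | _ n ih =>
  have ih_swap : ∀ b, b 2 + b 3 < n → mdeg b + cL = x →
      mkS (monomial (b + Finsupp.single 1 2) 1) ∈ N ∧
        mkS (monomial (b + Finsupp.single 0 2) 1) ∈ N := fun b hb hbx =>
    ⟨ih _ (by simpa using hb) _ (by rw [mdeg_add_single_two, hbx]) rfl,
      ih _ (by simpa using hb) _ (by rw [mdeg_add_single_two, hbx]) rfl⟩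
  by_cases h2 : 2 ≤ a 2
  · obtain ⟨b, rfl⟩ := le_iff_exists_add'.1 (Finsupp.single_le_iff.2 h2)
    rw [mdeg_add_single_two] at ha
    obtain ⟨h1, h0⟩ := ih_swap b (by simp at hn; omega) ha
    rw [mk_monomial_add_X2_sq]
    exact add_mem h1 h0
  by_cases h3 : 2 ≤ a 3
  · obtain ⟨b, rfl⟩ := le_iff_exists_add'.1 (Finsupp.single_le_iff.2 h3)
    rw [mdeg_add_single_two] at ha
    obtain ⟨h1, h0⟩ := ih_swap b (by simp at hn; omega) ha
    rw [mk_monomial_add_X3_sq]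
    exact add_mem h1 (N.smul_mem lam h0)
  exact Submodule.subset_span ⟨a, ⟨ha, by omega, by omega⟩, rfl⟩

noncomputable def Sring.lift {A : Type*} [CommRing A] [Algebra k A] (u v r₁ r₂ : A)
    (h₁ : r₁ ^ 2 = v ^ 2 + u ^ 2) (h₂ : r₂ ^ 2 = v ^ 2 + algebraMap k A lam * u ^ 2) :
    Sring k lam →ₐ[k] A :=
  Ideal.Quotient.liftₐ _ (aeval ![u, v, r₁, r₂]) fun _ hp => RingHom.mem_ker.1 <|
    (Ideal.span_le (I := RingHom.ker (aeval (R := k) ![u, v, r₁, r₂]))).2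
      (by rintro _ (rfl | rfl) <;> simp [h₁, h₂]) hp

lemma Sring.lift_mk_monomial {A : Type*} [CommRing A] [Algebra k A] (u v r₁ r₂ : A)
    (h₁ : r₁ ^ 2 = v ^ 2 + u ^ 2) (h₂ : r₂ ^ 2 = v ^ 2 + algebraMap k A lam * u ^ 2)
    (a : Fin 4 →₀ ℕ) :
    Sring.lift u v r₁ r₂ h₁ h₂ (mkS (monomial a 1)) =
      u ^ a 0 * v ^ a 1 * r₁ ^ a 2 * r₂ ^ a 3 := by
  change aeval ![u, v, r₁, r₂] (monomial a 1) = _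
  simp [aeval_monomial, Finsupp.prod_fintype, Fin.prod_univ_four]

lemma linearIndependent_mk_monomial {ι : Type*} {a : ι → Fin 4 →₀ ℕ}
    (ha : Function.Injective a) {s t : ℕ} (h2 : ∀ i, a i 2 = s) (h3 : ∀ i, a i 3 = t) :
    LinearIndependent k (fun i => mkS (monomial (a i) 1)) := by
  let P := MvPolynomial (Fin 2) k
  let Ω := AlgebraicClosure (FractionRing P)
  have hinj : Function.Injective (algebraMap P Ω) := by
    rw [IsScalarTower.algebraMap_eq P (FractionRing P) Ω]
    exact (algebraMap (FractionRing P) Ω).injective.comp (IsFractionRing.injective P _)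
  set u := algebraMap P Ω (X 0)
  set v := algebraMap P Ω (X 1)
  have hne : ∀ c : k, v ^ 2 + algebraMap k Ω c * u ^ 2 ≠ 0 := fun c h => by
    rw [IsScalarTower.algebraMap_apply k P Ω, ← map_pow, ← map_pow, ← map_mul, ← map_add,
      ← map_zero (algebraMap P Ω)] at h
    simpa using congrArg (eval ![0, 1]) (hinj h)
  obtain ⟨r₁, h₁⟩ := IsAlgClosed.exists_pow_nat_eq (v ^ 2 + u ^ 2) two_pos
  obtain ⟨r₂, h₂⟩ := IsAlgClosed.exists_pow_nat_eq (v ^ 2 + algebraMap k Ω lam * u ^ 2) two_pos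
  have hr : r₁ ^ s * r₂ ^ t ≠ 0 := by
    refine mul_ne_zero (pow_ne_zero _ ?_) (pow_ne_zero _ ?_) <;> rintro rfl
    · exact hne 1 (by simpa using h₁.symm)
    · exact hne lam (by simpa using h₂.symm)
  apply LinearIndependent.of_comp (Sring.lift u v r₁ r₂ h₁ h₂).toLinearMap
  have hcomp :
      (Sring.lift u v r₁ r₂ h₁ h₂).toLinearMap ∘ (fun i => mkS (monomial (a i) 1)) =
      (LinearMap.mulLeft k (r₁ ^ s * r₂ ^ t) ∘ₗ (IsScalarTower.toAlgHom k P Ω).toLinearMap) ∘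
        fun i => monomial (Finsupp.single 0 (a i 0) + Finsupp.single 1 (a i 1)) 1 := by
    funext i
    simp [Sring.lift_mk_monomial, h2, h3, monomial_add_single, ← X_pow_eq_monomial, u, v]
    ring
  rw [hcomp]
  refine LinearIndependent.map' ?_ _
    (LinearMap.ker_eq_bot.2 ((mul_right_injective₀ hr).comp hinj))
  refine (basisMonomials (Fin 2) k).linearIndependent.comp _ fun i j hij => ha ?_
  have h0 : a i 0 = a j 0 := by simpa using DFunLike.congr_fun hij 0
  have h1 : a i 1 = a j 1 := by simpa using DFunLike.congr_fun hij 1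
  ext n
  fin_cases n
  exacts [h0, h1, (h2 i).trans (h2 j).symm, (h3 i).trans (h3 j).symm]

lemma Sx_eq_span_reduced (x : Lgrp) :
    Sx k lam x = Submodule.span k
      ((fun b => mkS (monomial b 1)) '' {b | mdeg b = x ∧ b 2 < 2 ∧ b 3 < 2}) := by
  refine le_antisymm (Submodule.span_le.2 ?_) (Submodule.span_mono ?_)
  · rintro _ ⟨_, ⟨a, ha, rfl⟩, rfl⟩
    exact mk_monomial_mem_span_reduced a ha
  · rintro _ ⟨b, ⟨hb, -⟩, rfl⟩
    exact ⟨_, ⟨b, hb, rfl⟩, rfl⟩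

noncomputable def reducedExponent (l : Fin 4 → ℕ) (M j : ℕ) : Fin 4 →₀ ℕ :=
  Finsupp.equivFunOnFinite.symm ![l 0 + 2 * j, l 1 + 2 * (M - j), l 2, l 3]

lemma reducedExponent_injective (l : Fin 4 → ℕ) (M : ℕ) :
    Function.Injective fun j : Fin (M + 1) => reducedExponent l M j := fun i j h => by
  have h0 := DFunLike.congr_fun h 0
  simp only [reducedExponent, Finsupp.coe_equivFunOnFinite_symm] at h0
  exact Fin.ext (by simpa using h0)

lemma setOf_reduced_eq_range {l : Fin 4 → ℕ} (hl : ∀ i, l i < 2) (M : ℕ) :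
    {b | mdeg b = ∑ i, (l i : ℤ) • xL i + (M : ℤ) • cL ∧ b 2 < 2 ∧ b 3 < 2} =
      Set.range fun j : Fin (M + 1) => reducedExponent l M j := by
  ext b
  simp only [mdeg_eq_iff hl, Set.mem_ofPred_eq, Set.mem_range]
  have := hl 0; have := hl 1; have := hl 2; have := hl 3
  constructor
  · rintro ⟨⟨hmod, hsum⟩, hb2, hb3⟩
    have := hmod 0; have := hmod 1; have := hmod 2; have := hmod 3
    simp only [Fin.sum_univ_four] at hsum
    refine ⟨⟨b 0 / 2, by omega⟩, ?_⟩
    ext n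
    fin_cases n <;> simp [reducedExponent] <;> omega
  · rintro ⟨j, rfl⟩
    simp [reducedExponent, Fin.forall_fin_succ, Fin.sum_univ_four]
    omega

lemma finrank_Sx {l : Fin 4 → ℕ} (hl : ∀ i, l i < 2) (M : ℕ) :
    Module.finrank k (Sx k lam (∑ i, (l i : ℤ) • xL i + (M : ℤ) • cL)) = M + 1 := by
  rw [Sx_eq_span_reduced, setOf_reduced_eq_range hl, ← Set.range_comp, finrank_span_eq_card,
    Fintype.card_fin]
  exact linearIndependent_mk_monomial (reducedExponent_injective l M) (fun _ => rfl) fun _ => rfl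

lemma Sx_eq_bot {l : Fin 4 → ℕ} (hl : ∀ i, l i < 2) {m : ℤ} (hm : m < 0) :
    Sx k lam (∑ i, (l i : ℤ) • xL i + m • cL) = ⊥ := by
  rw [Sx, Submodule.span_eq_bot]
  rintro _ ⟨_, ⟨a, ha, rfl⟩, rfl⟩
  have := ((mdeg_eq_iff hl a).1 ha).2
  omega

end Ring

theorem dim_homogeneous_component_general (k : Type*) [Field k]
    (lam : k)
    (l : Fin 4 → ℤ) (m : ℤ) (hl : ∀ i, l i = 0 ∨ l i = 1)
    (x : Lgrp) (hx : x = ∑ i, l i • xL i + m • cL) :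
    (0 ≤ m → Module.finrank k (Sx k lam x) = m.toNat + 1) ∧
    (m < 0 → Sx k lam x = ⊥) := by
  lift l to Fin 4 → ℕ using fun i => by rcases hl i with h | h <;> omega
  beta_reduce at hl hx
  have hl₂ : ∀ i, l i < 2 := fun i => by rcases hl i with h | h <;> omega
  subst hx
  refine ⟨fun hm => ?_, Sx_eq_bot hl₂⟩
  lift m to ℕ using hm
  simpa using finrank_Sx hl₂ m

/-- For `x ∈ 𝕃` with normal form `x = Σᵢ lᵢxᵢ + l·c` (`lᵢ ∈ {0,1}`, `l ∈ ℤ`), the homogeneous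
component `S_x` has `k`-dimension `l + 1` if `l ≥ 0` and vanishes if `l < 0`. In particular
`dim_k S_{xᵢ} = 1` and `dim_k S_c = 2`. -/
theorem dim_homogeneous_component (k : Type*) [Field k] (hchar : ringChar k ≠ 2)
    (lam : k) (h0 : lam ≠ 0) (h1 : lam ≠ 1)
    (l : Fin 4 → ℤ) (m : ℤ) (hl : ∀ i, l i = 0 ∨ l i = 1)
    (x : Lgrp) (hx : x = ∑ i, l i • xL i + m • cL) :
    (0 ≤ m → Module.finrank k (Sx k lam x) = m.toNat + 1) ∧
    (m < 0 → Sx k lam x = ⊥) :=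
  dim_homogeneous_component_general k lam l m hl x hx
end
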